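/- Let k ≥ 1 and let Γ be a finite graph whose vertex set is partitioned into a set W of 'white' vertices and a set B_e of 'external black' vertices, and let E_θ be a set of ('dashed') edges of Γ, each of whose two endpoints lies in W ∪ B_e. Assume: (i) every white vertex is incident to at least 3 dashed edges (counted with multiplicity for loops), (ii) every external black vertex is incident to at least 1 dashed edge, (iii) |B_e| ≥ 2k, and (iv) |E_θ| − |W| ≤ k. Then W = ∅, |E_θ| = k, and |B_e| = 2k. -/

import Mathlib

/-! Double counting of edge endpoints: every white vertex absorbs at least three of the
`2 |E|` endpoints and every external black vertex at least one, so `3 |W| + |B_e| ≤ 2 |E|`.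
Together with `2k ≤ |B_e|` and `|E| ≤ k + |W|` this forces `3 |W| ≤ 2 |W|`, i.e. `W = ∅`,
after which all the inequalities are equalities. -/

open Finset

theorem Fintype.mul_card_add_mul_card_le_sum {α β : Type*} [Fintype α] [Fintype β]
    (f : α ⊕ β → ℕ) {a b : ℕ} (ha : ∀ x, a ≤ f (Sum.inl x)) (hb : ∀ y, b ≤ f (Sum.inr y)) :
    a * Fintype.card α + b * Fintype.card β ≤ ∑ v, f v := by
  rw [Fintype.sum_sum_type, mul_comm a, mul_comm b]
  exact add_le_add (card_nsmul_le_sum _ _ _ fun x _ ↦ ha x)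
    (card_nsmul_le_sum _ _ _ fun y _ ↦ hb y)

theorem plain_graph_order_count_general (k : ℕ)
    (W Be E : Type) [Fintype W] [Fintype Be] [Fintype E]
    (deg : W ⊕ Be → ℕ)
    (handshake : ∑ v, deg v = 2 * Fintype.card E)
    (hW : ∀ w : W, 3 ≤ deg (Sum.inl w))
    (hB : ∀ b : Be, 1 ≤ deg (Sum.inr b))
    (hBe : 2 * k ≤ Fintype.card Be)
    (horder : (Fintype.card E : ℤ) - (Fintype.card W : ℤ) ≤ (k : ℤ)) :
    Fintype.card W = 0 ∧ Fintype.card E = k ∧ Fintype.card Be = 2 * k := by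
  have endpoints : 3 * Fintype.card W + 1 * Fintype.card Be ≤ 2 * Fintype.card E :=
    handshake ▸ Fintype.mul_card_add_mul_card_le_sum deg hW hB
  omega

/-- Combinatorial core of Proposition 3.4 (`keypropforpairing`): a plain graph
of order at most `k` (order = #dashed edges − #white vertices), whose every
white vertex has dashed degree ≥ 3, whose every external black vertex has
dashed degree ≥ 1, and which has at least `2k` external black vertices, must
have no white vertices, exactly `k` dashed edges and exactly `2k` external
black vertices.  The incidence structure is encoded by a degree function
`deg` on the vertices `W ⊕ Be` whose total sum is twice the number of dashed
edges (every dashed edge has its two endpoints in `W ∪ B_e`). -/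
theorem plain_graph_order_count (k : ℕ) (hk : 1 ≤ k)
    (W Be E : Type) [Fintype W] [Fintype Be] [Fintype E]
    (deg : W ⊕ Be → ℕ)
    (handshake : ∑ v, deg v = 2 * Fintype.card E)
    (hW : ∀ w : W, 3 ≤ deg (Sum.inl w))
    (hB : ∀ b : Be, 1 ≤ deg (Sum.inr b))
    (hBe : 2 * k ≤ Fintype.card Be)
    (horder : (Fintype.card E : ℤ) - (Fintype.card W : ℤ) ≤ (k : ℤ)) :
    Fintype.card W = 0 ∧ Fintype.card E = k ∧ Fintype.card Be = 2 * k :=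
  plain_graph_order_count_general k W Be E deg handshake hW hB hBe horder
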